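/- Fix n, a weight vector ω : Fin n → ℕ, and m delegators each of weight 1 who each independently delegate to a uniformly random voter. Let P^d(A | m) be the resulting probability that A wins (each voter independently supports A with probability p ∈ (0,1), ties broken with probability 1/2). If n is odd, then lim_{m→∞} P^d(A | m) = P^c_{EW}(A), the probability A wins when all n voters have equal weight 1 and no delegation occurs. -/

import Mathlib

/-!
Condition on the set `S` of A-supporters, with `k = #S`. The number `B` of delegators landing
in `S` is binomial, and A can only win if `m - 2B` stays below a constant depending on `ω` and
`S` alone. Averaging `x ^ (2B - m)` over all `n ^ m` delegations gives
`((k x² + n - k) / (n x)) ^ m`, which decays geometrically for a suitable `x > 1` as soon as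
`2k < n` (a Chernoff bound), so the conditional winning probability tends to `0`. If `2k > n`,
pass to the complement: `G ω Sᶜ = 1 - G ω S`. As `n` is odd, `2k = n` never happens, so in the
limit every voter counts equally.
-/

open Finset Filter

/-- Winning probability of A given that exactly the voters in `S` support A. -/
noncomputable def G {n : ℕ} (ω : Fin n → ℕ) (S : Finset (Fin n)) : ℝ :=
  if 2 * ∑ j ∈ S, ω j > ∑ j, ω j then 1
  else if 2 * ∑ j ∈ S, ω j = ∑ j, ω j then 1/2
  else 0

/-- Probability that A wins when each voter independently supports A with probability `p`. -/
noncomputable def PA {n : ℕ} (p : ℝ) (ω : Fin n → ℕ) : ℝ :=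
  ∑ S : Finset (Fin n), p ^ S.card * (1 - p) ^ (n - S.card) * G ω S

/-- Post-delegation weights: each of `m` unit-weight delegators `i` adds one vote to voter `d i`. -/
def wpost {n m : ℕ} (ω : Fin n → ℕ) (d : Fin m → Fin n) : Fin n → ℕ :=
  fun j => ω j + (Finset.univ.filter (fun i => d i = j)).card

/-- Probability that A wins after `m` unit-weight delegators each delegate to a
uniformly random voter, independently. -/
noncomputable def Pd {n : ℕ} (p : ℝ) (ω : Fin n → ℕ) (m : ℕ) : ℝ :=
  ∑ d : Fin m → Fin n, ((1 : ℝ) / n) ^ m * PA p (wpost ω d)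

open scoped Topology

def delegCount {α : Type*} [DecidableEq α] {m : ℕ} (S : Finset α) (d : Fin m → α) : ℕ :=
  #{i | d i ∈ S}

theorem sum_pow_delegCount {α : Type*} [Fintype α] [DecidableEq α] (m : ℕ) (S : Finset α)
    (t : ℝ) : ∑ d : Fin m → α, t ^ delegCount S d = (#S * t + #Sᶜ) ^ m := by
  have hprod (d : Fin m → α) : t ^ delegCount S d = ∏ i, if d i ∈ S then t else 1 := by
    rw [prod_ite, prod_const, prod_const, one_pow, mul_one]
    rfl
  simp_rw [hprod]
  rw [← Fintype.sum_pow (fun a => if a ∈ S then t else 1), sum_ite, sum_const, sum_const]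
  simp [nsmul_eq_mul, filter_not, compl_eq_univ_sdiff]

theorem sum_wpost {n m : ℕ} (ω : Fin n → ℕ) (d : Fin m → Fin n) (S : Finset (Fin n)) :
    ∑ j ∈ S, wpost ω d j = ∑ j ∈ S, ω j + delegCount S d := by
  simp only [wpost, sum_add_distrib, delegCount, card_filter]
  rw [sum_comm]
  simp

theorem G_nonneg {n : ℕ} (ω : Fin n → ℕ) (S : Finset (Fin n)) : 0 ≤ G ω S := by
  unfold G; split_ifs <;> norm_num

theorem G_compl {n : ℕ} (ω : Fin n → ℕ) (S : Finset (Fin n)) : G ω Sᶜ = 1 - G ω S := by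
  unfold G
  rw [← sum_add_sum_compl S ω]
  split_ifs <;> first | omega | norm_num

theorem G_const_one_eq_zero {n : ℕ} {S : Finset (Fin n)} (h : 2 * #S < n) :
    G (fun _ => 1) S = 0 := by
  simp only [G, sum_const, smul_eq_mul, mul_one, card_univ, Fintype.card_fin]
  split_ifs <;> first | rfl | omega

theorem G_wpost_le {n m : ℕ} (ω : Fin n → ℕ) (d : Fin m → Fin n) (S : Finset (Fin n)) {x : ℝ}
    (hx : 1 ≤ x) :
    G (wpost ω d) S ≤ x ^ (2 * ∑ j ∈ S, ω j) * (x ^ 2) ^ delegCount S d / x ^ m := by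
  have htotal : ∑ j, wpost ω d j = ∑ j, ω j + m := by
    simpa [delegCount] using sum_wpost ω d univ
  have hone (h : ∑ j, wpost ω d j ≤ 2 * ∑ j ∈ S, wpost ω d j) :
      1 ≤ x ^ (2 * ∑ j ∈ S, ω j) * (x ^ 2) ^ delegCount S d / x ^ m := by
    rw [htotal, sum_wpost] at h
    rw [one_le_div (by positivity), ← pow_mul, ← pow_add]
    exact pow_le_pow_right₀ hx (by omega)
  unfold G
  split_ifs with hwin htie
  · exact hone hwin.le
  · exact le_trans (by norm_num) (hone htie.ge)
  · positivity

noncomputable def condWinProb {n : ℕ} (ω : Fin n → ℕ) (S : Finset (Fin n)) (m : ℕ) : ℝ :=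
  ∑ d : Fin m → Fin n, ((1 : ℝ) / n) ^ m * G (wpost ω d) S

theorem Pd_eq_sum_condWinProb {n : ℕ} (p : ℝ) (ω : Fin n → ℕ) (m : ℕ) :
    Pd p ω m = ∑ S, p ^ #S * (1 - p) ^ (n - #S) * condWinProb ω S m := by
  simp only [Pd, PA, condWinProb, mul_sum]
  rw [sum_comm]
  exact sum_congr rfl fun _ _ ↦ sum_congr rfl fun _ _ ↦ by ring

theorem condWinProb_nonneg {n : ℕ} (ω : Fin n → ℕ) (S : Finset (Fin n)) (m : ℕ) :
    0 ≤ condWinProb ω S m :=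
  sum_nonneg fun _ _ ↦ mul_nonneg (by positivity) (G_nonneg _ _)

theorem condWinProb_compl {n : ℕ} (hn : 0 < n) (ω : Fin n → ℕ) (S : Finset (Fin n)) (m : ℕ) :
    condWinProb ω Sᶜ m = 1 - condWinProb ω S m := by
  have htotal : ∑ _d : Fin m → Fin n, ((1 : ℝ) / n) ^ m = 1 := by
    simp [hn.ne']
  simp only [condWinProb, G_compl, mul_sub, mul_one, sum_sub_distrib, htotal]

theorem condWinProb_le {n : ℕ} (ω : Fin n → ℕ) (S : Finset (Fin n)) (m : ℕ) {x : ℝ}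
    (hx : 1 ≤ x) :
    condWinProb ω S m ≤ x ^ (2 * ∑ j ∈ S, ω j) * ((#S * x ^ 2 + #Sᶜ) / (n * x)) ^ m := by
  calc condWinProb ω S m
      ≤ ∑ d : Fin m → Fin n, ((1 : ℝ) / n) ^ m *
          (x ^ (2 * ∑ j ∈ S, ω j) * (x ^ 2) ^ delegCount S d / x ^ m) :=
        sum_le_sum fun d _ ↦ mul_le_mul_of_nonneg_left (G_wpost_le ω d S hx) (by positivity)
    _ = x ^ (2 * ∑ j ∈ S, ω j) / (n * x) ^ m * ∑ d : Fin m → Fin n, (x ^ 2) ^ delegCount S d := by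
        rw [mul_sum univ]
        exact sum_congr rfl fun _ _ ↦ by ring
    _ = _ := by
        rw [sum_pow_delegCount, div_pow]
        ring

theorem exists_one_le_div_lt_one {a b : ℝ} (ha : 0 ≤ a) (hab : a < b) :
    ∃ x : ℝ, 1 ≤ x ∧ (a * x ^ 2 + b) / ((a + b) * x) < 1 := by
  -- `a x² - (a + b) x + b` has the roots `1` and `b / a`, and this `x` lies strictly between them.
  refine ⟨(a + b + 1) / (2 * a + 1), ?_, ?_⟩
  · rw [one_le_div (by positivity)]
    linarith
  · rw [div_lt_one (mul_pos (by linarith) (div_pos (by linarith) (by linarith)))]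
    field_simp
    nlinarith [mul_pos (pow_pos (sub_pos.2 hab) 2) (by linarith : 0 < a + 1)]

theorem tendsto_condWinProb_zero {n : ℕ} (ω : Fin n → ℕ) {S : Finset (Fin n)} (h : 2 * #S < n) :
    Tendsto (condWinProb ω S) atTop (𝓝 0) := by
  have hcard : #S + #Sᶜ = n := by rw [card_compl, Fintype.card_fin]; omega
  obtain ⟨x, hx, hr⟩ := exists_one_le_div_lt_one (a := #S) (b := #Sᶜ) (by positivity)
    (by exact_mod_cast (by omega : #S < #Sᶜ))
  rw [← Nat.cast_add, hcard] at hr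
  have hr0 : 0 ≤ (#S * x ^ 2 + #Sᶜ) / (n * x) := by
    have : 0 ≤ x := by linarith
    positivity
  refine squeeze_zero (condWinProb_nonneg ω S) (fun m ↦ condWinProb_le ω S m hx) ?_
  simpa using (tendsto_pow_atTop_nhds_zero_of_lt_one hr0 hr).const_mul (x ^ (2 * ∑ j ∈ S, ω j))

theorem tendsto_condWinProb {n : ℕ} (hn : Odd n) (ω : Fin n → ℕ) (S : Finset (Fin n)) :
    Tendsto (condWinProb ω S) atTop (𝓝 (G (fun _ ↦ 1) S)) := by
  have hne : 2 * #S ≠ n := fun h ↦ Nat.not_odd_iff_even.2 ⟨#S, by omega⟩ hn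
  rcases hne.lt_or_gt with hlt | hgt
  · rw [G_const_one_eq_zero hlt]
    exact tendsto_condWinProb_zero ω hlt
  · have hlt : 2 * #Sᶜ < n := by
      have := card_le_univ S
      rw [card_compl, Fintype.card_fin] at *
      omega
    have hG : G (fun _ ↦ 1) S = 1 := by
      rw [← compl_compl S, G_compl, G_const_one_eq_zero hlt, sub_zero]
    have := (tendsto_condWinProb_zero ω hlt).const_sub 1
    simp only [condWinProb_compl hn.pos, sub_sub_cancel, sub_zero] at this
    rwa [hG]

theorem stmt_10_general {n : ℕ} (hn : Odd n) (ω : Fin n → ℕ) (p : ℝ) :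
    Tendsto (fun m => Pd p ω m) atTop (nhds (PA p (fun _ : Fin n => 1))) := by
  simp only [Pd_eq_sum_condWinProb, PA]
  exact tendsto_finsetSum _ fun S _ ↦ (tendsto_condWinProb hn ω S).const_mul _

/-- For odd `n`, as the number of unit-weight delegators tends to infinity, the
post-delegation winning probability of A converges to the equal-weight winning probability. -/
theorem stmt_10 {n : ℕ} (hn : Odd n) (ω : Fin n → ℕ) (p : ℝ) (hp0 : 0 < p) (hp1 : p < 1) :
    Tendsto (fun m => Pd p ω m) atTop (nhds (PA p (fun _ : Fin n => 1))) :=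
  stmt_10_general hn ω p
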